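/- arXiv:1811.11360 — 4 statements merged into one kernel-verified Lean document; each statement's English description precedes it below -/
import Mathlib

section
/- Let Ñ_{α,p} = α + N_{α,p} denote the shifted negative binomial variable. If Ñ is a compound random variable whose shape parameter is weighted by L̃ = Ñ_{α,p₂} (i.e., conditionally on L̃ = α + h, Ñ is distributed as Ñ_{α+h, p₁}), then Ñ has the same distribution as Ñ_{α, p₁p₂}. Equivalently, the moment generating functions agree: Σ_{h≥0} (p₁/(e^{-t} - q₁))^{α+h} P(Ñ_{α,p₂} = α+h) = (p₁p₂/(e^{-t} - (1 - p₁p₂)))^α for t in a neighborhood of 0. -/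
open MeasureTheory ProbabilityTheory Real

/-- The negative binomial probability mass function with shape `α` and success probability `p`. -/
noncomputable def negBinomPMF (α p : ℝ) (k : ℕ) : ℝ :=
  Real.Gamma (k + α) / (Nat.factorial k * Real.Gamma α) * p ^ α * (1 - p) ^ k

/-- The negative binomial distribution as a measure on `ℝ` supported on `ℕ`. -/
noncomputable def negBinomMeasure (α p : ℝ) : Measure ℝ :=
  Measure.sum fun k : ℕ => ENNReal.ofReal (negBinomPMF α p k) • Measure.dirac (k : ℝ)

/-- Convolution order: `ν` equals `μ` convolved with some nonnegative probability measure. -/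
def ConvLE (μ ν : Measure ℝ) : Prop :=
  ∃ ρ : Measure ℝ, IsProbabilityMeasure ρ ∧ ρ (Set.Iio 0) = 0 ∧ ν = μ.conv ρ

/-- Usual stochastic order on measures. -/
def StochLE (μ ν : Measure ℝ) : Prop := ∀ t : ℝ, μ (Set.Ici t) ≤ ν (Set.Ici t)

/-!
Given the shape `α + h`, the moment generating function of `Ñ_{α+h,p₁}` at `t` is `s ^ (α + h)`
with `s = p₁ / (e^{-t} - q₁)`, so the mixture is the probability generating function
`E[s ^ Ñ_{α,p₂}]`. Summing it with the negative binomial series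
`∑ Γ(h + α) / (h! Γ(α)) x ^ h = (1 - x) ^ (-α)` at `x = s q₂` gives `(s p₂ / (1 - s q₂)) ^ α`,
and `s p₂ / (1 - s q₂) = p₁ p₂ / (e^{-t} - (1 - p₁ p₂))`.
-/

namespace Real

theorem Gamma_add_nat_eq_mul_ascPochhammer {α : ℝ} (hα : ∀ k : ℕ, α ≠ -k) (n : ℕ) :
    Gamma (α + n) = Gamma α * (ascPochhammer ℝ n).eval α := by
  induction n with
  | zero => simp
  | succ n ih =>
    have hne : α + n ≠ 0 := fun h => hα n (by linarith)
    rw [Nat.cast_succ, ← add_assoc, Gamma_add_one hne, ih, ascPochhammer_succ_right,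
      Polynomial.eval_mul]
    simp only [Polynomial.eval_add, Polynomial.eval_X, Polynomial.eval_natCast]
    ring

theorem choose_add_nat_sub_one_eq_Gamma_div {α : ℝ} (hα : ∀ k : ℕ, α ≠ -k) (n : ℕ) :
    Ring.choose (α + n - 1) n = Gamma (n + α) / (n.factorial * Gamma α) := by
  rw [← Ring.multichoose_eq, eq_div_iff (mul_ne_zero (by positivity) (Gamma_ne_zero hα)),
    add_comm, Gamma_add_nat_eq_mul_ascPochhammer hα, ← Polynomial.ascPochhammer_smeval_eq_eval,
    ← Ring.factorial_nsmul_multichoose_eq_ascPochhammer, nsmul_eq_mul]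
  ring

theorem hasSum_Gamma_div_mul_pow {α x : ℝ} (hα : ∀ k : ℕ, α ≠ -k) (hx : |x| < 1) :
    HasSum (fun n : ℕ => Gamma (n + α) / (n.factorial * Gamma α) * x ^ n) ((1 - x) ^ (-α)) := by
  have := (one_div_one_sub_rpow_hasFPowerSeriesOnBall_zero α).hasSum
    (y := x) (by simpa [enorm_eq_nnnorm, ← NNReal.coe_lt_one] using hx)
  rw [rpow_neg (by linarith [(abs_lt.mp hx).2])]
  simpa [FormalMultilinearSeries.ofScalars_apply_eq, choose_add_nat_sub_one_eq_Gamma_div hα,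
    mul_comm] using this

end Real

theorem hasSum_rpow_add_mul_negBinomPMF {α p s : ℝ} (hα : ∀ k : ℕ, α ≠ -k) (hp : 0 ≤ p)
    (hs : 0 ≤ s) (hsp : |s * (1 - p)| < 1) :
    HasSum (fun k : ℕ => s ^ (α + k) * negBinomPMF α p k)
      ((s * p / (1 - s * (1 - p))) ^ α) := by
  have hpos : 0 < 1 - s * (1 - p) := by linarith [(abs_lt.mp hsp).2]
  rw [div_rpow (mul_nonneg hs hp) hpos.le, div_eq_mul_inv, ← rpow_neg hpos.le]
  refine ((hasSum_Gamma_div_mul_pow hα hsp).mul_left ((s * p) ^ α)).congr_fun fun k => ?_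
  have hk : α + k ≠ 0 := fun h => hα k (by linarith)
  rw [rpow_add' hs hk, mul_rpow hs hp, negBinomPMF, rpow_natCast, mul_pow]
  ring

theorem shifted_negBinom_shape_mixture_general (α p₁ p₂ t : ℝ) (hα : 0 < α)
    (hp₁ : 0 < p₁) (hp₂ : 0 < p₂) (hp₂' : p₂ < 1)
    (ht : Real.exp t * (1 - p₁ * p₂) < 1) :
    ∑' h : ℕ, (p₁ / (Real.exp (-t) - (1 - p₁))) ^ (α + (h : ℝ)) * negBinomPMF α p₂ h
      = (p₁ * p₂ / (Real.exp (-t) - (1 - p₁ * p₂))) ^ α := by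
  have hE : 1 - p₁ * p₂ < exp (-t) := by
    rwa [exp_neg, inv_eq_one_div, lt_div_iff₀ (exp_pos t), mul_comm]
  have hd : 0 < exp (-t) - (1 - p₁) := by nlinarith
  set s := p₁ / (exp (-t) - (1 - p₁))
  have hs : 0 < s := div_pos hp₁ hd
  have hsp : |s * (1 - p₂)| < 1 := by
    rw [abs_of_nonneg (mul_nonneg hs.le (by linarith)), div_mul_eq_mul_div, div_lt_one hd]
    linarith
  have hα' : ∀ k : ℕ, α ≠ -k := fun k => by linarith [(Nat.cast_nonneg k : (0 : ℝ) ≤ k)]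
  rw [(hasSum_rpow_add_mul_negBinomPMF hα' hp₂.le hs.le hsp).tsum_eq]
  have hq : 0 < 1 - s * (1 - p₂) := by linarith [(abs_lt.mp hsp).2]
  congr 1
  rw [div_eq_div_iff hq.ne' (by linarith)]
  simp only [s]
  field_simp
  ring

/-- The shape mixture of shifted negative binomials: weighting the shape of
`Ñ_{·,p₁}` by `Ñ_{α,p₂}` gives `Ñ_{α,p₁p₂}`, expressed through moment generating
functions. -/
theorem shifted_negBinom_shape_mixture (α p₁ p₂ t : ℝ) (hα : 0 < α)
    (hp₁ : 0 < p₁) (hp₁' : p₁ < 1) (hp₂ : 0 < p₂) (hp₂' : p₂ < 1)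
    (ht : Real.exp t * (1 - p₁ * p₂) < 1) :
    ∑' h : ℕ, (p₁ / (Real.exp (-t) - (1 - p₁))) ^ (α + (h : ℝ)) * negBinomPMF α p₂ h
      = (p₁ * p₂ / (Real.exp (-t) - (1 - p₁ * p₂))) ^ α :=
  shifted_negBinom_shape_mixture_general α p₁ p₂ t hα hp₁ hp₂ hp₂' ht
end

section
/- Let 0 < α₁ ≤ α₂, and let p₁₁ ≥ p₁₂, p₂₁ ≥ p₂₂ with (p₁₁, p₁₂) ≺ (p₂₁, p₂₂), all in (0,1). Then N_{α₁,p₁₁} + N_{α₂,p₁₂} ≤_conv N_{α₁,p₂₁} + N_{α₂,p₂₂} (independent summands). -/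
/-!
The generating series of `N_{α,p}` is `(p / (1 - q X)) ^ α` with `q = 1 - p`, whose logarithmic
derivative `α q / (1 - q X)` has coefficients `α q ^ (m + 1)`. Let `F₁`, `F₂` be the series of the
two sums and `Q = F₂ / F₁`. Then `Q' = L Q`, where `L` is the difference of the logarithmic
derivatives, with coefficients `α₁ (q₂₁ ^ (m+1) - q₁₁ ^ (m+1)) + α₂ (q₂₂ ^ (m+1) - q₁₂ ^ (m+1))`.
The hypotheses place `q₂₁ ≤ q₁₁ ≤ q₁₂ ≤ q₂₂` with `q₁₁ - q₂₁ = q₂₂ - q₁₂`, so convexity of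
`t ↦ t ^ (m+1)` and `α₁ ≤ α₂` make these coefficients nonnegative. Comparing coefficients in
`Q' = L Q` shows inductively that `Q` has nonnegative coefficients, so it is the generating series
of a measure `ρ` on `ℕ` with `F₁ Q = F₂`, i.e. the second sum is the first convolved with `ρ`;
comparing total masses gives `ρ(ℕ) = 1`.
-/

open MeasureTheory ProbabilityTheory Real

open PowerSeries
open scoped ENNReal

theorem add_pow_sub_pow_le_add_pow_sub_pow {R : Type*} [CommRing R] [LinearOrder R]
    [IsStrictOrderedRing R] {a b h : R} (ha : 0 ≤ a) (hab : a ≤ b) (hh : 0 ≤ h) (n : ℕ) :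
    (a + h) ^ n - a ^ n ≤ (b + h) ^ n - b ^ n := by
  rw [← geom_sum₂_mul, ← geom_sum₂_mul, add_sub_cancel_left, add_sub_cancel_left]
  have hb : 0 ≤ b := ha.trans hab
  gcongr

theorem mul_pow_sub_pow_le_mul_pow_sub_pow {R : Type*} [CommRing R] [LinearOrder R]
    [IsStrictOrderedRing R] {α₁ α₂ a b c d : R} (hα₁ : 0 ≤ α₁) (hα : α₁ ≤ α₂) (ha : 0 ≤ a)
    (hab : a ≤ b) (hbc : b ≤ c) (hd : b - a = d - c) (n : ℕ) :
    α₁ * (b ^ n - a ^ n) ≤ α₂ * (d ^ n - c ^ n) := by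
  have hgap := add_pow_sub_pow_le_add_pow_sub_pow ha (hab.trans hbc) (sub_nonneg.2 hab) n
  rw [add_sub_cancel, hd, add_sub_cancel] at hgap
  have hgap₀ : 0 ≤ b ^ n - a ^ n := sub_nonneg.2 (pow_le_pow_left₀ ha hab n)
  calc α₁ * (b ^ n - a ^ n) ≤ α₂ * (b ^ n - a ^ n) := mul_le_mul_of_nonneg_right hα hgap₀
    _ ≤ α₂ * (d ^ n - c ^ n) := mul_le_mul_of_nonneg_left hgap (hα₁.trans hα)

namespace PowerSeries

open Finset in
theorem coeff_mul_nonneg {R : Type*} [CommSemiring R] [PartialOrder R] [IsOrderedRing R]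
    {F G : R⟦X⟧} (hF : ∀ n, 0 ≤ coeff n F) (hG : ∀ n, 0 ≤ coeff n G) (n : ℕ) :
    0 ≤ coeff n (F * G) := by
  rw [coeff_mul]
  exact sum_nonneg fun p _ ↦ mul_nonneg (hF _) (hG _)

theorem derivative_mul_eq_add_mul {R : Type*} [CommRing R] {F G U V : R⟦X⟧}
    (hF : d⁄dX R F = U * F) (hG : d⁄dX R G = V * G) :
    d⁄dX R (F * G) = (U + V) * (F * G) := by
  rw [Derivation.leibniz, hF, hG, smul_eq_mul, smul_eq_mul]
  ring

theorem derivative_eq_sub_mul_of_mul_eq {R : Type*} [CommRing R] [IsDomain R]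
    {F G Q U W : R⟦X⟧} (hF₀ : F ≠ 0) (hF : d⁄dX R F = U * F) (hG : d⁄dX R G = W * G)
    (hFQ : F * Q = G) : d⁄dX R Q = (W - U) * Q := by
  have hlog := congrArg (d⁄dX R) hFQ
  rw [Derivation.leibniz, hF, hG, ← hFQ, smul_eq_mul, smul_eq_mul] at hlog
  refine mul_left_cancel₀ hF₀ ?_
  linear_combination hlog

open Finset in
theorem coeff_nonneg_of_derivative_eq_mul {R : Type*} [CommRing R] [LinearOrder R]
    [IsStrictOrderedRing R] {Q L : R⟦X⟧} (hL : ∀ n, 0 ≤ coeff n L)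
    (hQ₀ : 0 ≤ constantCoeff Q) (hQ : d⁄dX R Q = L * Q) (n : ℕ) : 0 ≤ coeff n Q := by
  induction n using Nat.strong_induction_on with
  | _ n ih =>
    rcases n with _ | n
    · simpa using hQ₀
    have hrec := congrArg (coeff n) hQ
    rw [coeff_derivative, coeff_mul] at hrec
    have hsum : 0 ≤ ∑ p ∈ antidiagonal n, coeff p.1 L * coeff p.2 Q :=
      sum_nonneg fun p hp ↦ mul_nonneg (hL _)
        (ih _ (Nat.lt_succ_of_le (Finset.HasAntidiagonal.antidiagonal.snd_le hp)))
    exact nonneg_of_mul_nonneg_left (hrec ▸ hsum) (by positivity)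

end PowerSeries

theorem Real.Gamma_add_nat_eq_mul_ascPochhammer_s11 {α : ℝ} (hα : ∀ m : ℕ, α ≠ -m) (n : ℕ) :
    Gamma (α + n) = Gamma α * (ascPochhammer ℝ n).eval α := by
  induction n with
  | zero => simp
  | succ n ih =>
    have hαn : α + n ≠ 0 := fun h ↦ hα n (eq_neg_of_add_eq_zero_left h)
    rw [ascPochhammer_succ_eval, Nat.cast_succ, ← add_assoc, Gamma_add_one hαn, ih]
    ring

theorem Real.Gamma_add_nat_div_eq_choose {α : ℝ} (hα : ∀ m : ℕ, α ≠ -m) (n : ℕ) :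
    Gamma (n + α) / (n.factorial * Gamma α) = Ring.choose (α + n - 1) n := by
  rw [Ring.choose_eq_smul, Polynomial.descPochhammer_smeval_eq_ascPochhammer,
    Polynomial.ascPochhammer_smeval_eq_eval, add_comm (n : ℝ),
    Gamma_add_nat_eq_mul_ascPochhammer_s11 hα, show α + n - 1 - n + 1 = α by ring, smul_eq_mul]
  have := Gamma_ne_zero hα
  field_simp

section NegBinom

variable {α p : ℝ}

theorem negBinomPMF_nonneg (hα : 0 < α) (hp : p ∈ Set.Ioo (0 : ℝ) 1) (k : ℕ) :
    0 ≤ negBinomPMF α p k := by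
  obtain ⟨hp₀, hp₁⟩ := hp
  have : 0 ≤ 1 - p := by linarith
  unfold negBinomPMF
  positivity

theorem coeff_mk_negBinomPMF_nonneg (hα : 0 < α) (hp : p ∈ Set.Ioo (0 : ℝ) 1) (k : ℕ) :
    0 ≤ coeff k (mk (negBinomPMF α p)) := by
  simpa using negBinomPMF_nonneg hα hp k

theorem constantCoeff_mk_negBinomPMF (hα : 0 < α) (p : ℝ) :
    constantCoeff (mk (negBinomPMF α p)) = p ^ α := by
  have := (Gamma_pos_of_pos hα).ne'
  simp [← coeff_zero_eq_constantCoeff_apply, negBinomPMF, this]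

theorem succ_mul_negBinomPMF_succ (hα : 0 < α) (p : ℝ) (k : ℕ) :
    (k + 1) * negBinomPMF α p (k + 1) = (1 - p) * (k + α) * negBinomPMF α p k := by
  have hΓ : Gamma (k + 1 + α) = (k + α) * Gamma (k + α) := by
    rw [add_right_comm, Gamma_add_one (by positivity)]
  have := (Gamma_pos_of_pos hα).ne'
  simp only [negBinomPMF, hΓ, Nat.factorial_succ, Nat.cast_mul, Nat.cast_succ, pow_succ]
  field_simp

theorem hasSum_negBinomPMF (hα : 0 < α) (hp : p ∈ Set.Ioo (0 : ℝ) 1) :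
    HasSum (negBinomPMF α p) 1 := by
  obtain ⟨hp₀, hp₁⟩ := hp
  have hq : 1 - p ∈ Metric.eball (0 : ℝ) 1 := by
    rw [Metric.mem_eball, edist_dist, dist_zero_right, Real.norm_eq_abs,
      abs_of_pos (by linarith)]
    exact ENNReal.ofReal_lt_one.2 (by linarith)
  have h := (Real.one_div_one_sub_rpow_hasFPowerSeriesOnBall_zero α).hasSum hq
  simp only [FormalMultilinearSeries.ofScalars_apply_eq, smul_eq_mul, zero_add,
    sub_sub_cancel] at h
  have hpmf : negBinomPMF α p = fun k : ℕ ↦ p ^ α * (Ring.choose (α + k - 1) k * (1 - p) ^ k) := by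
    ext k
    rw [negBinomPMF, Gamma_add_nat_div_eq_choose fun m ↦ by linarith [m.cast_nonneg (α := ℝ)]]
    ring
  have hpα : p ^ α ≠ 0 := (rpow_pos_of_pos hp₀ α).ne'
  simpa [hpmf, hpα] using h.mul_left (p ^ α)

-- The logarithmic derivative `α q / (1 - q X)` of `(p / (1 - q X)) ^ α`, where `q = 1 - p`.
noncomputable def negBinomLogDeriv (α p : ℝ) : ℝ⟦X⟧ := mk fun m ↦ α * (1 - p) ^ (m + 1)

theorem derivative_mk_negBinomPMF (hα : 0 < α) (p : ℝ) :
    d⁄dX ℝ (mk (negBinomPMF α p)) = negBinomLogDeriv α p * mk (negBinomPMF α p) := by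
  have hode : (1 - C (1 - p) * X) * d⁄dX ℝ (mk (negBinomPMF α p))
      = C (α * (1 - p)) * mk (negBinomPMF α p) := by
    ext n
    rw [sub_mul, one_mul, map_sub, mul_assoc, coeff_C_mul, coeff_C_mul, coeff_derivative]
    rcases n with _ | n
    · rw [coeff_zero_X_mul, coeff_mk, coeff_mk]
      linear_combination (by simpa using succ_mul_negBinomPMF_succ hα p 0 :
        negBinomPMF α p 1 = (1 - p) * α * negBinomPMF α p 0)
    · rw [coeff_succ_X_mul, coeff_derivative, coeff_mk, coeff_mk]
      have hrec := succ_mul_negBinomPMF_succ hα p (n + 1)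
      push_cast at hrec ⊢
      linear_combination hrec
  have hlog : (1 - C (1 - p) * X) * negBinomLogDeriv α p = C (α * (1 - p)) := by
    ext n
    rw [sub_mul, one_mul, map_sub, mul_assoc, coeff_C_mul, coeff_C]
    rcases n with _ | n
    · simp [negBinomLogDeriv]
    · rw [coeff_succ_X_mul, negBinomLogDeriv, coeff_mk, coeff_mk, if_neg n.succ_ne_zero]
      ring
  have hne : (1 - C (1 - p) * X : ℝ⟦X⟧) ≠ 0 := fun h ↦ by
    simpa using congrArg constantCoeff h
  refine mul_left_cancel₀ hne ?_
  rw [hode, ← mul_assoc, hlog]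

theorem coeff_negBinomLogDeriv_sub_nonneg {α₁ α₂ p₁₁ p₁₂ p₂₁ p₂₂ : ℝ} (hα₁ : 0 < α₁)
    (hα : α₁ ≤ α₂) (hp₂₁ : p₂₁ < 1) (ho1 : p₁₂ ≤ p₁₁) (hsum : p₁₁ + p₁₂ = p₂₁ + p₂₂)
    (hmax : p₁₁ ≤ p₂₁) (n : ℕ) :
    0 ≤ coeff n (negBinomLogDeriv α₁ p₂₁ + negBinomLogDeriv α₂ p₂₂
      - (negBinomLogDeriv α₁ p₁₁ + negBinomLogDeriv α₂ p₁₂)) := by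
  have key := mul_pow_sub_pow_le_mul_pow_sub_pow hα₁.le hα (a := 1 - p₂₁) (b := 1 - p₁₁)
    (c := 1 - p₁₂) (d := 1 - p₂₂) (by linarith) (by linarith) (by linarith) (by linarith) (n + 1)
  simp only [map_sub, map_add, negBinomLogDeriv, coeff_mk]
  linarith

end NegBinom

open Finset in
theorem ENNReal.tsum_tsum_eq_tsum_sum_antidiagonal {A : Type*} [AddCommMonoid A]
    [HasAntidiagonal A] (f : A → A → ℝ≥0∞) :
    ∑' i, ∑' j, f i j = ∑' n, ∑ p ∈ antidiagonal n, f p.1 p.2 := by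
  rw [← ENNReal.tsum_prod, ← HasAntidiagonal.sigmaAntidiagonalEquivProd.tsum_eq,
    ENNReal.tsum_sigma']
  exact tsum_congr fun n ↦ Finset.tsum_subtype (antidiagonal n) fun p ↦ f p.1 p.2

namespace MeasureTheory.Measure

variable {M : Type*} [AddMonoid M] [MeasurableSpace M] [MeasurableAdd₂ M]

theorem conv_apply_univ (μ ν : Measure M) [SFinite ν] :
    μ.conv ν Set.univ = μ Set.univ * ν Set.univ := by
  simpa [mul_comm] using lintegral_conv (μ := μ) (ν := ν) measurable_one

instance isProbabilityMeasure_conv (μ ν : Measure M) [IsProbabilityMeasure μ]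
    [IsProbabilityMeasure ν] : IsProbabilityMeasure (μ.conv ν) :=
  ⟨by rw [conv_apply_univ, measure_univ, measure_univ, one_mul]⟩

end MeasureTheory.Measure

-- `ENNReal.ofReal` reads negative coefficients as `0`.
noncomputable def seriesMeasure (F : ℝ⟦X⟧) : Measure ℝ :=
  Measure.sum fun k : ℕ ↦ ENNReal.ofReal (coeff k F) • Measure.dirac (k : ℝ)

instance (F : ℝ⟦X⟧) : SFinite (seriesMeasure F) := by
  unfold seriesMeasure
  infer_instance

theorem lintegral_seriesMeasure (F : ℝ⟦X⟧) (f : ℝ → ℝ≥0∞) :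
    ∫⁻ x, f x ∂seriesMeasure F = ∑' k : ℕ, ENNReal.ofReal (coeff k F) * f k := by
  simp [seriesMeasure, lintegral_sum_measure]

theorem seriesMeasure_Iio_zero (F : ℝ⟦X⟧) : seriesMeasure F (Set.Iio 0) = 0 := by
  rw [← lintegral_indicator_one measurableSet_Iio, lintegral_seriesMeasure]
  simp

theorem seriesMeasure_mul {F G : ℝ⟦X⟧} (hF : ∀ n, 0 ≤ coeff n F) (hG : ∀ n, 0 ≤ coeff n G) :
    seriesMeasure (F * G) = (seriesMeasure F).conv (seriesMeasure G) := by
  ext s hs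
  rw [← lintegral_indicator_one hs, ← lintegral_indicator_one hs,
    Measure.lintegral_conv (measurable_one.indicator hs), lintegral_seriesMeasure,
    lintegral_seriesMeasure]
  simp_rw [lintegral_seriesMeasure, ← ENNReal.tsum_mul_left]
  rw [ENNReal.tsum_tsum_eq_tsum_sum_antidiagonal]
  refine tsum_congr fun n ↦ ?_
  rw [coeff_mul, ENNReal.ofReal_sum_of_nonneg fun p _ ↦ mul_nonneg (hF _) (hG _),
    Finset.sum_mul]
  refine Finset.sum_congr rfl fun p hp ↦ ?_
  rw [← Nat.cast_add, Finset.HasAntidiagonal.mem_antidiagonal.1 hp,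
    ENNReal.ofReal_mul (hF _), mul_assoc]

theorem convLE_seriesMeasure_of_derivative_eq_mul {F G U W : ℝ⟦X⟧}
    (hF : ∀ n, 0 ≤ coeff n F) (hF₀ : 0 < constantCoeff F) (hG₀ : 0 < constantCoeff G)
    (hFU : d⁄dX ℝ F = U * F) (hGW : d⁄dX ℝ G = W * G) (hUW : ∀ n, 0 ≤ coeff n (W - U))
    [IsProbabilityMeasure (seriesMeasure F)] [IsProbabilityMeasure (seriesMeasure G)] :
    ConvLE (seriesMeasure F) (seriesMeasure G) := by
  set Q := F⁻¹ * G
  have hFQ : F * Q = G := by rw [← mul_assoc, PowerSeries.mul_inv_cancel _ hF₀.ne', one_mul]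
  have hQ₀ : 0 < constantCoeff Q := pos_of_mul_pos_right (by rwa [← map_mul, hFQ]) hF₀.le
  have hF_ne : F ≠ 0 := ne_of_apply_ne constantCoeff (by rw [map_zero]; exact hF₀.ne')
  have hQ : ∀ n, 0 ≤ coeff n Q := coeff_nonneg_of_derivative_eq_mul hUW hQ₀.le
    (derivative_eq_sub_mul_of_mul_eq hF_ne hFU hGW hFQ)
  have hconv : seriesMeasure G = (seriesMeasure F).conv (seriesMeasure Q) := by
    rw [← hFQ, seriesMeasure_mul hF hQ]
  refine ⟨seriesMeasure Q, ⟨?_⟩, seriesMeasure_Iio_zero Q, hconv⟩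
  simpa [Measure.conv_apply_univ] using (congrArg (· Set.univ) hconv).symm

section NegBinomSum

variable {α₁ α₂ p₁ p₂ : ℝ}

theorem negBinomMeasure_eq_seriesMeasure (α p : ℝ) :
    negBinomMeasure α p = seriesMeasure (mk (negBinomPMF α p)) := by
  simp [negBinomMeasure, seriesMeasure]

theorem isProbabilityMeasure_negBinomMeasure {α p : ℝ} (hα : 0 < α)
    (hp : p ∈ Set.Ioo (0 : ℝ) 1) : IsProbabilityMeasure (negBinomMeasure α p) := by
  constructor
  rw [negBinomMeasure_eq_seriesMeasure, ← lintegral_one, lintegral_seriesMeasure]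
  simp only [coeff_mk, mul_one]
  rw [← ENNReal.ofReal_tsum_of_nonneg (negBinomPMF_nonneg hα hp)
    (hasSum_negBinomPMF hα hp).summable, (hasSum_negBinomPMF hα hp).tsum_eq, ENNReal.ofReal_one]

noncomputable def negBinomSumSeries (α₁ p₁ α₂ p₂ : ℝ) : ℝ⟦X⟧ :=
  mk (negBinomPMF α₁ p₁) * mk (negBinomPMF α₂ p₂)

theorem coeff_negBinomSumSeries_nonneg (hα₁ : 0 < α₁) (hp₁ : p₁ ∈ Set.Ioo (0 : ℝ) 1)
    (hα₂ : 0 < α₂) (hp₂ : p₂ ∈ Set.Ioo (0 : ℝ) 1) (n : ℕ) :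
    0 ≤ coeff n (negBinomSumSeries α₁ p₁ α₂ p₂) :=
  coeff_mul_nonneg (coeff_mk_negBinomPMF_nonneg hα₁ hp₁) (coeff_mk_negBinomPMF_nonneg hα₂ hp₂) n

theorem constantCoeff_negBinomSumSeries_pos (hα₁ : 0 < α₁) (hp₁ : p₁ ∈ Set.Ioo (0 : ℝ) 1)
    (hα₂ : 0 < α₂) (hp₂ : p₂ ∈ Set.Ioo (0 : ℝ) 1) :
    0 < constantCoeff (negBinomSumSeries α₁ p₁ α₂ p₂) := by
  have := hp₁.1
  have := hp₂.1
  rw [negBinomSumSeries, map_mul, constantCoeff_mk_negBinomPMF hα₁,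
    constantCoeff_mk_negBinomPMF hα₂]
  positivity

theorem derivative_negBinomSumSeries (hα₁ : 0 < α₁) (hα₂ : 0 < α₂) :
    d⁄dX ℝ (negBinomSumSeries α₁ p₁ α₂ p₂)
      = (negBinomLogDeriv α₁ p₁ + negBinomLogDeriv α₂ p₂) * negBinomSumSeries α₁ p₁ α₂ p₂ :=
  derivative_mul_eq_add_mul (derivative_mk_negBinomPMF hα₁ p₁) (derivative_mk_negBinomPMF hα₂ p₂)

theorem negBinomMeasure_conv_eq_seriesMeasure (hα₁ : 0 < α₁) (hp₁ : p₁ ∈ Set.Ioo (0 : ℝ) 1)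
    (hα₂ : 0 < α₂) (hp₂ : p₂ ∈ Set.Ioo (0 : ℝ) 1) :
    (negBinomMeasure α₁ p₁).conv (negBinomMeasure α₂ p₂)
      = seriesMeasure (negBinomSumSeries α₁ p₁ α₂ p₂) := by
  rw [negBinomSumSeries, seriesMeasure_mul (coeff_mk_negBinomPMF_nonneg hα₁ hp₁)
    (coeff_mk_negBinomPMF_nonneg hα₂ hp₂), negBinomMeasure_eq_seriesMeasure,
    negBinomMeasure_eq_seriesMeasure]

theorem isProbabilityMeasure_seriesMeasure_negBinomSumSeries (hα₁ : 0 < α₁)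
    (hp₁ : p₁ ∈ Set.Ioo (0 : ℝ) 1) (hα₂ : 0 < α₂) (hp₂ : p₂ ∈ Set.Ioo (0 : ℝ) 1) :
    IsProbabilityMeasure (seriesMeasure (negBinomSumSeries α₁ p₁ α₂ p₂)) := by
  have := isProbabilityMeasure_negBinomMeasure hα₁ hp₁
  have := isProbabilityMeasure_negBinomMeasure hα₂ hp₂
  rw [← negBinomMeasure_conv_eq_seriesMeasure hα₁ hp₁ hα₂ hp₂]
  infer_instance

end NegBinomSum

/-- Convolution order with different shapes and majorized, similarly ordered
success probabilities. -/
theorem negBinom_diff_shape_majorize_prob_conv_order (α₁ α₂ p₁₁ p₁₂ p₂₁ p₂₂ : ℝ)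
    (hα₁ : 0 < α₁) (hα : α₁ ≤ α₂)
    (h11 : p₁₁ ∈ Set.Ioo (0:ℝ) 1) (h12 : p₁₂ ∈ Set.Ioo (0:ℝ) 1)
    (h21 : p₂₁ ∈ Set.Ioo (0:ℝ) 1) (h22 : p₂₂ ∈ Set.Ioo (0:ℝ) 1)
    (ho1 : p₁₂ ≤ p₁₁) (ho2 : p₂₂ ≤ p₂₁)
    (hsum : p₁₁ + p₁₂ = p₂₁ + p₂₂) (hmax : max p₁₁ p₁₂ ≤ max p₂₁ p₂₂) :
    ConvLE ((negBinomMeasure α₁ p₁₁).conv (negBinomMeasure α₂ p₁₂))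
      ((negBinomMeasure α₁ p₂₁).conv (negBinomMeasure α₂ p₂₂)) := by
  have hα₂ : 0 < α₂ := hα₁.trans_le hα
  rw [max_eq_left ho1, max_eq_left ho2] at hmax
  have := isProbabilityMeasure_seriesMeasure_negBinomSumSeries hα₁ h11 hα₂ h12
  have := isProbabilityMeasure_seriesMeasure_negBinomSumSeries hα₁ h21 hα₂ h22
  rw [negBinomMeasure_conv_eq_seriesMeasure hα₁ h11 hα₂ h12,
    negBinomMeasure_conv_eq_seriesMeasure hα₁ h21 hα₂ h22]
  exact convLE_seriesMeasure_of_derivative_eq_mul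
    (coeff_negBinomSumSeries_nonneg hα₁ h11 hα₂ h12)
    (constantCoeff_negBinomSumSeries_pos hα₁ h11 hα₂ h12)
    (constantCoeff_negBinomSumSeries_pos hα₁ h21 hα₂ h22)
    (derivative_negBinomSumSeries hα₁ hα₂) (derivative_negBinomSumSeries hα₁ hα₂)
    (coeff_negBinomLogDeriv_sub_nonneg hα₁ hα h21.2 ho1 hsum hmax)
end

section
/- For α > 0 and p₁, p₂, p₃ ∈ (0,1) with p₃ = p₁p₂, the shifted negative binomial variables satisfy L̃_{α,p₁} + L̃_{α,p₂} ≤_st α + L̃_{α,p₃}, where the left-hand summands are independent: α + L̃_{α,p₃} is distributed as L̃_{α,p₁} + L̃_{α,p₂} + W for some nonnegative W (not necessarily independent of the sum). -/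
/-
Write `NB(β, p)` for the law of `N_{β,p}`. For `q = p₁ p₂` the law `NB(α, q)` is a mixture:
if `N ~ NB(α, p₁)` and, given `N = n`, `M ~ NB(α + n, p₂)`, then `N + M ~ NB(α, q)`
(a Gamma-function identity together with the binomial theorem). Since
`NB(β + 1, p) = NB(β, p) ∗ Geom(p)`, the law `NB(α + n, p₂)` stochastically dominates
`NB(α, p₂)`, so `N + M` dominates `N + X₂` with `X₂ ~ NB(α, p₂)` independent of `N`.
Shifting both sides by `2α` gives the theorem.
-/

open MeasureTheory ProbabilityTheory Real

open scoped ENNReal Nat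
open Finset

namespace StochLE

lemma trans {μ ν ρ : Measure ℝ} (h₁ : StochLE μ ν) (h₂ : StochLE ν ρ) : StochLE μ ρ :=
  fun t => (h₁ t).trans (h₂ t)

lemma sum_smul {ι : Type*} {μ ν : ι → Measure ℝ} (w : ι → ℝ≥0∞) (h : ∀ i, StochLE (μ i) (ν i)) :
    StochLE (Measure.sum fun i => w i • μ i) (Measure.sum fun i => w i • ν i) := by
  intro t
  simp only [Measure.sum_apply _ measurableSet_Ici, Measure.smul_apply, smul_eq_mul]
  exact ENNReal.tsum_le_tsum fun i => mul_le_mul' le_rfl (h i t)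

end StochLE

lemma conv_apply_Ici (ρ μ : Measure ℝ) [SFinite μ] (t : ℝ) :
    (ρ ∗ μ) (Set.Ici t) = ∫⁻ x, μ (Set.Ici (t - x)) ∂ρ := by
  rw [Measure.conv, Measure.map_apply measurable_add measurableSet_Ici,
    Measure.prod_apply (measurable_add measurableSet_Ici)]
  congr! 3 with x
  ext y
  simp [add_comm]

lemma StochLE.conv_left {μ ν : Measure ℝ} [SFinite μ] [SFinite ν] (h : StochLE μ ν)
    (ρ : Measure ℝ) : StochLE (ρ ∗ μ) (ρ ∗ ν) := by
  intro t
  rw [conv_apply_Ici, conv_apply_Ici]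
  exact lintegral_mono fun x => h _

lemma ConvLE.stochLE {μ ν : Measure ℝ} [SFinite μ] (h : ConvLE μ ν) : StochLE μ ν := by
  obtain ⟨ρ, hρ, hρ_nonneg, rfl⟩ := h
  intro t
  have h_ae : ∀ᵐ x ∂ρ, μ (Set.Ici t) ≤ μ (Set.Ici (t - x)) := by
    have h_nonneg : ∀ᵐ x ∂ρ, 0 ≤ x := ae_iff.2 (by simp only [not_le]; exact hρ_nonneg)
    filter_upwards [h_nonneg] with x hx
    exact measure_mono (Set.Ici_subset_Ici.2 (by linarith))
  calc μ (Set.Ici t) = ∫⁻ _, μ (Set.Ici t) ∂ρ := by simp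
    _ ≤ ∫⁻ x, μ (Set.Ici (t - x)) ∂ρ := lintegral_mono_ae h_ae
    _ = (μ ∗ ρ) (Set.Ici t) := by rw [Measure.conv_comm, conv_apply_Ici]

lemma dirac_conv_conv_dirac_conv (a b : ℝ) (μ ν : Measure ℝ) [SFinite μ] [SFinite ν] :
    (Measure.dirac a ∗ μ) ∗ (Measure.dirac b ∗ ν) = Measure.dirac (a + b) ∗ (μ ∗ ν) := by
  rw [Measure.conv_assoc, ← Measure.conv_assoc μ, Measure.conv_comm μ, Measure.conv_assoc,
    ← Measure.conv_assoc, Measure.dirac_conv_dirac]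

noncomputable def natMeasure (w : ℕ → ℝ≥0∞) : Measure ℝ :=
  Measure.sum fun k => w k • Measure.dirac (k : ℝ)

instance (w : ℕ → ℝ≥0∞) : SFinite (natMeasure w) := by
  unfold natMeasure; infer_instance

lemma natMeasure_Iio_zero (w : ℕ → ℝ≥0∞) : natMeasure w (Set.Iio 0) = 0 := by
  simp [natMeasure, Measure.sum_apply _ measurableSet_Iio]

lemma natMeasure_conv (w : ℕ → ℝ≥0∞) (ν : Measure ℝ) [SFinite ν] :
    natMeasure w ∗ ν = Measure.sum fun n => w n • (Measure.dirac (n : ℝ) ∗ ν) := by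
  rw [natMeasure, Measure.conv, Measure.prod_sum_left, Measure.map_sum (by fun_prop)]
  simp_rw [Measure.prod_smul_left, Measure.map_smul]
  rfl

lemma ENNReal.tsum_prod_eq_tsum_sum_antidiagonal {A : Type*} [AddMonoid A] [HasAntidiagonal A]
    (f : A × A → ℝ≥0∞) : ∑' p, f p = ∑' n, ∑ p ∈ antidiagonal n, f p := by
  rw [← HasAntidiagonal.sigmaAntidiagonalEquivProd.tsum_eq, ENNReal.tsum_sigma']
  exact tsum_congr fun n => Finset.tsum_subtype (antidiagonal n) f

lemma sum_smul_dirac_conv_natMeasure (a : ℕ → ℝ≥0∞) (b : ℕ → ℕ → ℝ≥0∞) :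
    Measure.sum (fun i => a i • (Measure.dirac (i : ℝ) ∗ natMeasure (b i))) =
      natMeasure fun m => ∑ ij ∈ antidiagonal m, a ij.1 * b ij.1 ij.2 := by
  ext s hs
  have h_shift (i : ℕ) (c : ℕ → ℝ≥0∞) :
      Measure.dirac (i : ℝ) ∗ natMeasure c =
        Measure.sum fun j => c j • Measure.dirac ((i + j : ℕ) : ℝ) := by
    rw [Measure.dirac_conv, natMeasure, Measure.map_sum (by fun_prop)]
    simp [Measure.map_smul]
  simp only [h_shift]
  simp only [natMeasure, Measure.sum_apply _ hs, Measure.smul_apply, smul_eq_mul,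
    ← ENNReal.tsum_mul_left, Finset.sum_mul]
  rw [← ENNReal.tsum_prod, ENNReal.tsum_prod_eq_tsum_sum_antidiagonal]
  refine tsum_congr fun m => Finset.sum_congr rfl fun ij hij => ?_
  rw [mem_antidiagonal.1 hij, mul_assoc]

lemma negBinomPMF_nonneg_s16 {β p : ℝ} (hβ : 0 < β) (hp : 0 ≤ p) (hp' : p ≤ 1) (k : ℕ) :
    0 ≤ negBinomPMF β p k := by
  have := Real.Gamma_pos_of_pos (show 0 < k + β by positivity)
  have := Real.Gamma_pos_of_pos hβ
  have : 0 ≤ 1 - p := by linarith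
  unfold negBinomPMF
  positivity

lemma sum_range_Gamma_add_div_factorial {β : ℝ} (hβ : 0 < β) (m : ℕ) :
    ∑ n ∈ range (m + 1), Gamma (n + β) / n ! = Gamma (m + β + 1) / (m ! * β) := by
  induction m with
  | zero => simp [Real.Gamma_add_one hβ.ne', hβ.ne']
  | succ m ih =>
    rw [Finset.sum_range_succ, ih, Nat.factorial_succ, Nat.cast_mul, Nat.cast_succ,
      Real.Gamma_add_one (by positivity : (m + 1 : ℝ) + β ≠ 0)]
    rw [show (m : ℝ) + β + 1 = m + 1 + β by ring]
    field_simp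

lemma negBinomPMF_add_one {β p : ℝ} (hβ : 0 < β) (hp : 0 < p) (m : ℕ) :
    negBinomPMF (β + 1) p m =
      ∑ ij ∈ antidiagonal m, negBinomPMF β p ij.1 * ((1 - p) ^ ij.2 * p) := by
  have h_term : ∀ ij ∈ antidiagonal m, negBinomPMF β p ij.1 * ((1 - p) ^ ij.2 * p) =
      Gamma (ij.1 + β) / ij.1 ! * (p ^ β * p * (1 - p) ^ m / Gamma β) := by
    rintro ⟨i, j⟩ hij
    rw [HasAntidiagonal.mem_antidiagonal] at hij
    subst hij
    have := (Real.Gamma_pos_of_pos hβ).ne'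
    simp only [negBinomPMF, pow_add]
    field_simp
  rw [Finset.sum_congr rfl h_term, ← Finset.sum_mul,
    Finset.Nat.sum_antidiagonal_eq_sum_range_succ (fun i _ => Gamma (i + β) / i !),
    sum_range_Gamma_add_div_factorial hβ, negBinomPMF, Real.rpow_add_one hp.ne',
    Real.Gamma_add_one hβ.ne', ← add_assoc]
  have := (Real.Gamma_pos_of_pos hβ).ne'
  field_simp

lemma negBinomPMF_mul {β p₁ p₂ : ℝ} (hβ : 0 < β) (hp₁ : 0 ≤ p₁) (hp₂ : 0 < p₂) (m : ℕ) :
    negBinomPMF β (p₁ * p₂) m =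
      ∑ ij ∈ antidiagonal m, negBinomPMF β p₁ ij.1 * negBinomPMF (β + ij.1) p₂ ij.2 := by
  have h_term : ∀ ij ∈ antidiagonal m,
      negBinomPMF β p₁ ij.1 * negBinomPMF (β + ij.1) p₂ ij.2 =
        Gamma (m + β) / (m ! * Gamma β) * (p₁ ^ β * p₂ ^ β) *
          (m.choose ij.1 * (((1 - p₁) * p₂) ^ ij.1 * (1 - p₂) ^ ij.2)) := by
    rintro ⟨i, j⟩ hij
    rw [HasAntidiagonal.mem_antidiagonal] at hij
    subst hij
    have := (Real.Gamma_pos_of_pos hβ).ne'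
    have := (Real.Gamma_pos_of_pos (show 0 < β + i by positivity)).ne'
    simp only [negBinomPMF, Nat.cast_add_choose, Real.rpow_add_natCast hp₂.ne', mul_pow]
    rw [show (j : ℝ) + (β + i) = (i + j : ℕ) + β by push_cast; ring,
      show (i : ℝ) + β = β + i by ring]
    field_simp
  rw [Finset.sum_congr rfl h_term, ← Finset.mul_sum]
  have h_binom : ∑ ij ∈ antidiagonal m,
      (m.choose ij.1 : ℝ) * (((1 - p₁) * p₂) ^ ij.1 * (1 - p₂) ^ ij.2) = (1 - p₁ * p₂) ^ m := by
    rw [show 1 - p₁ * p₂ = (1 - p₁) * p₂ + (1 - p₂) by ring, (Commute.all _ _).add_pow']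
    simp [nsmul_eq_mul]
  rw [h_binom, negBinomPMF, Real.mul_rpow hp₁ hp₂.le]

lemma negBinomMeasure_eq_natMeasure (β p : ℝ) :
    negBinomMeasure β p = natMeasure fun k => ENNReal.ofReal (negBinomPMF β p k) := rfl

instance (β p : ℝ) : SFinite (negBinomMeasure β p) := by
  rw [negBinomMeasure_eq_natMeasure]; infer_instance

lemma negBinomMeasure_add_one {β p : ℝ} (hβ : 0 < β) (hp : 0 < p) (hp' : p ≤ 1) :
    negBinomMeasure (β + 1) p =
      negBinomMeasure β p ∗ natMeasure fun k => ENNReal.ofReal ((1 - p) ^ k * p) := by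
  have : 0 ≤ 1 - p := by linarith
  rw [negBinomMeasure_eq_natMeasure (β + 1), negBinomMeasure_eq_natMeasure β, natMeasure_conv,
    sum_smul_dirac_conv_natMeasure (b := fun _ k => ENNReal.ofReal ((1 - p) ^ k * p))]
  congr! 2 with m
  rw [negBinomPMF_add_one hβ hp, ENNReal.ofReal_sum_of_nonneg fun ij _ =>
    mul_nonneg (negBinomPMF_nonneg_s16 hβ hp.le hp' _) (by positivity)]
  exact Finset.sum_congr rfl fun ij _ => ENNReal.ofReal_mul (negBinomPMF_nonneg_s16 hβ hp.le hp' _)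

lemma negBinomMeasure_mul {β p₁ p₂ : ℝ} (hβ : 0 < β) (hp₁ : 0 ≤ p₁) (hp₁' : p₁ ≤ 1)
    (hp₂ : 0 < p₂) (hp₂' : p₂ ≤ 1) :
    negBinomMeasure β (p₁ * p₂) = Measure.sum fun i : ℕ => ENNReal.ofReal (negBinomPMF β p₁ i) •
      (Measure.dirac (i : ℝ) ∗ negBinomMeasure (β + i) p₂) := by
  simp only [negBinomMeasure_eq_natMeasure]
  rw [sum_smul_dirac_conv_natMeasure]
  congr! 2 with m
  rw [negBinomPMF_mul hβ hp₁ hp₂, ENNReal.ofReal_sum_of_nonneg fun ij _ => mul_nonneg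
    (negBinomPMF_nonneg_s16 hβ hp₁ hp₁' _) (negBinomPMF_nonneg_s16 (by positivity) hp₂.le hp₂' _)]
  exact Finset.sum_congr rfl fun ij _ => ENNReal.ofReal_mul (negBinomPMF_nonneg_s16 hβ hp₁ hp₁' _)

lemma negBinomMeasure_convLE_add_one {β p : ℝ} (hβ : 0 < β) (hp : 0 < p) (hp' : p ≤ 1) :
    ConvLE (negBinomMeasure β p) (negBinomMeasure (β + 1) p) := by
  have : 0 ≤ 1 - p := by linarith
  refine ⟨_, ?_, natMeasure_Iio_zero _, negBinomMeasure_add_one hβ hp hp'⟩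
  refine HasSum.isProbabilityMeasure_sum_dirac (fun k => by positivity) ?_
  simpa [sub_sub_cancel, hp.ne'] using
    (hasSum_geometric_of_lt_one this (by linarith)).mul_right p

lemma negBinomMeasure_stochLE_add_nat {β p : ℝ} (hβ : 0 < β) (hp : 0 < p) (hp' : p ≤ 1) (n : ℕ) :
    StochLE (negBinomMeasure β p) (negBinomMeasure (β + n) p) := by
  induction n with
  | zero => rw [Nat.cast_zero, add_zero]; exact fun t => le_rfl
  | succ n ih =>
    rw [Nat.cast_succ, ← add_assoc]
    exact ih.trans (negBinomMeasure_convLE_add_one (by positivity) hp hp').stochLE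

lemma negBinomMeasure_conv_stochLE_mul {β p₁ p₂ : ℝ} (hβ : 0 < β) (hp₁ : 0 ≤ p₁) (hp₁' : p₁ ≤ 1)
    (hp₂ : 0 < p₂) (hp₂' : p₂ ≤ 1) :
    StochLE (negBinomMeasure β p₁ ∗ negBinomMeasure β p₂) (negBinomMeasure β (p₁ * p₂)) := by
  rw [negBinomMeasure_mul hβ hp₁ hp₁' hp₂ hp₂', negBinomMeasure_eq_natMeasure β p₁,
    natMeasure_conv]
  exact StochLE.sum_smul _ fun i => (negBinomMeasure_stochLE_add_nat hβ hp₂ hp₂' i).conv_left _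

/-- For `p₃ = p₁ p₂`, the sum of independent shifted negative binomials
`L̃_{α,p₁} + L̃_{α,p₂}` is stochastically dominated by `α + L̃_{α,p₃}`. -/
theorem shifted_negBinom_st_order (α p₁ p₂ p₃ : ℝ) (hα : 0 < α)
    (hp₁ : 0 < p₁) (hp₁' : p₁ < 1) (hp₂ : 0 < p₂) (hp₂' : p₂ < 1)
    (hp₃ : p₃ = p₁ * p₂) :
    StochLE
      (((negBinomMeasure α p₁).map fun x => α + x).conv
        ((negBinomMeasure α p₂).map fun x => α + x))
      (((negBinomMeasure α p₃).map fun x => α + x).map fun x => α + x) := by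
  subst hp₃
  simp only [← Measure.dirac_conv]
  rw [dirac_conv_conv_dirac_conv, ← Measure.conv_assoc (Measure.dirac α),
    Measure.dirac_conv_dirac]
  exact (negBinomMeasure_conv_stochLE_mul hα hp₁.le hp₁'.le hp₂ hp₂'.le).conv_left _
end

section
/- For fixed c > 0, the tail probability P(Σ_{i=1}^n λᵢ G_{αᵢ,1} ≥ c) is arrangement increasing in the pair of vectors (α⃗, λ⃗): in the two-coordinate case, if α₁ < α₂ and λ₁ < λ₂ (all positive), then P(λ₂ G_{α₁,1} + λ₁ G_{α₂,1} ≥ c) ≤ P(λ₁ G_{α₁,1} + λ₂ G_{α₂,1} ≥ c), with G_{α₁,1}, G_{α₂,1} independent standard gamma variables. -/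
/-!
Let `h(x, y) = f(x) g(y)` be the joint density and `A`, `B` the tails with coefficients
`(l₂, l₁)` and `(l₁, l₂)`. Mirroring `(x, y) ↦ (y, x)` exchanges `A` and `B`, and for `x ≤ y`
the point `(x, y)` lies in `B` whenever it lies in `A`. Hence the pair `{(x, y), (y, x)}`
contributes `(𝟙_B - 𝟙_A)(x, y) · (h(x, y) - h(y, x)) ≥ 0` more to `B` than to `A`, as soon as
`h(y, x) ≤ h(x, y)`. For gamma densities this holds because `g / f ∝ x ^ (α₂ - α₁)` is
nondecreasing.
-/

open MeasureTheory ProbabilityTheory Real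
open scoped ENNReal

def tailSet (l₁ l₂ c : ℝ) : Set (ℝ × ℝ) := {p | c ≤ l₁ * p.1 + l₂ * p.2}

lemma measurableSet_tailSet (l₁ l₂ c : ℝ) : MeasurableSet (tailSet l₁ l₂ c) :=
  measurableSet_le measurable_const (by fun_prop)

lemma swap_mem_tailSet_iff {l₁ l₂ c x y : ℝ} :
    (y, x) ∈ tailSet l₂ l₁ c ↔ (x, y) ∈ tailSet l₁ l₂ c := by
  simp only [tailSet, Set.mem_ofPred_eq, add_comm]

lemma mem_tailSet_of_mem_tailSet_swap_coeffs {l₁ l₂ c x y : ℝ} (hl : l₁ ≤ l₂) (hxy : x ≤ y)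
    (h : (x, y) ∈ tailSet l₂ l₁ c) : (x, y) ∈ tailSet l₁ l₂ c := by
  simp only [tailSet, Set.mem_ofPred_eq] at h ⊢
  nlinarith [mul_nonneg (sub_nonneg.2 hl) (sub_nonneg.2 hxy)]

lemma indicator_tailSet_add_swap_le {l₁ l₂ c x y : ℝ} (hl : l₁ ≤ l₂) (hxy : x ≤ y)
    {h : ℝ × ℝ → ℝ≥0∞} (hh : h (y, x) ≤ h (x, y)) :
    (tailSet l₂ l₁ c).indicator h (x, y) + (tailSet l₂ l₁ c).indicator h (y, x)
      ≤ (tailSet l₁ l₂ c).indicator h (x, y) + (tailSet l₁ l₂ c).indicator h (y, x) := by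
  have hA : (y, x) ∈ tailSet l₂ l₁ c ↔ (x, y) ∈ tailSet l₁ l₂ c := swap_mem_tailSet_iff
  have hB : (y, x) ∈ tailSet l₁ l₂ c ↔ (x, y) ∈ tailSet l₂ l₁ c := swap_mem_tailSet_iff
  classical
  simp only [Set.indicator_apply, hA, hB]
  by_cases hxyB : (x, y) ∈ tailSet l₁ l₂ c
  · by_cases hxyA : (x, y) ∈ tailSet l₂ l₁ c
    · simp [hxyA, hxyB]
    · simpa [hxyA, hxyB] using hh
  · simp [hxyB, mt (mem_tailSet_of_mem_tailSet_swap_coeffs hl hxy) hxyB]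

lemma lintegral_le_lintegral_of_add_swap_le {α : Type*} [MeasurableSpace α] {μ : Measure α}
    [SFinite μ] {F G : α × α → ℝ≥0∞} (hG : AEMeasurable G (μ.prod μ))
    (h : ∀ᵐ p ∂μ.prod μ, F p + F p.swap ≤ G p + G p.swap) :
    ∫⁻ p, F p ∂μ.prod μ ≤ ∫⁻ p, G p ∂μ.prod μ := by
  have hsymm : ∀ H : α × α → ℝ≥0∞, ∫⁻ p, H p.swap ∂μ.prod μ = ∫⁻ p, H p ∂μ.prod μ :=
    lintegral_prod_swap
  have h2 : 2 * ∫⁻ p, F p ∂μ.prod μ ≤ 2 * ∫⁻ p, G p ∂μ.prod μ :=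
    calc 2 * ∫⁻ p, F p ∂μ.prod μ
        = ∫⁻ p, F p ∂μ.prod μ + ∫⁻ p, F p.swap ∂μ.prod μ := by rw [hsymm, two_mul]
      _ ≤ ∫⁻ p, F p + F p.swap ∂μ.prod μ := le_lintegral_add _ _
      _ ≤ ∫⁻ p, G p + G p.swap ∂μ.prod μ := lintegral_mono_ae h
      _ = 2 * ∫⁻ p, G p ∂μ.prod μ := by rw [lintegral_add_left' hG, hsymm, two_mul]
  exact (ENNReal.mul_le_mul_iff_right two_ne_zero ENNReal.ofNat_ne_top).1 h2

theorem prod_withDensity_tailSet_le {μ : Measure ℝ} [SFinite μ] {f g : ℝ → ℝ≥0∞}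
    (hf : Measurable f) (hg : Measurable g)
    (hfg : ∀ᵐ x ∂μ, ∀ y, x ≤ y → f y * g x ≤ f x * g y) {l₁ l₂ : ℝ} (hl : l₁ ≤ l₂) (c : ℝ) :
    (μ.withDensity f).prod (μ.withDensity g) (tailSet l₂ l₁ c)
      ≤ (μ.withDensity f).prod (μ.withDensity g) (tailSet l₁ l₂ c) := by
  set h : ℝ × ℝ → ℝ≥0∞ := fun p => f p.1 * g p.2
  rw [prod_withDensity hf hg, withDensity_apply _ (measurableSet_tailSet _ _ _),
    withDensity_apply _ (measurableSet_tailSet _ _ _),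
    ← lintegral_indicator (measurableSet_tailSet _ _ _),
    ← lintegral_indicator (measurableSet_tailSet _ _ _)]
  refine lintegral_le_lintegral_of_add_swap_le
    (((hf.comp measurable_fst).mul (hg.comp measurable_snd)).indicator
      (measurableSet_tailSet _ _ _)).aemeasurable ?_
  filter_upwards [Measure.quasiMeasurePreserving_fst.ae hfg,
    Measure.quasiMeasurePreserving_snd.ae hfg] with ⟨x, y⟩ hx hy
  rcases le_total x y with hxy | hyx
  · exact indicator_tailSet_add_swap_le hl hxy (h := h) (hx y hxy)
  · rw [Prod.swap_prod_mk, add_comm, add_comm ((tailSet l₁ l₂ c).indicator _ _)]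
    exact indicator_tailSet_add_swap_le hl hyx (h := h) (hy x hyx)

lemma rpow_mul_rpow_le_rpow_mul_rpow {a b x y : ℝ} (hab : a ≤ b) (hx : 0 < x) (hxy : x ≤ y) :
    y ^ a * x ^ b ≤ x ^ a * y ^ b := by
  have hy : 0 < y := hx.trans_le hxy
  calc y ^ a * x ^ b = x ^ a * y ^ a * x ^ (b - a) := by
        rw [mul_assoc, mul_comm (x ^ a), mul_assoc, ← rpow_add hx, sub_add_cancel]
    _ ≤ x ^ a * y ^ a * y ^ (b - a) := by gcongr
    _ = x ^ a * y ^ b := by rw [mul_assoc, ← rpow_add hy, add_sub_cancel]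

lemma measurable_gammaPDF (a r : ℝ) : Measurable (gammaPDF a r) :=
  (measurable_gammaPDFReal a r).ennreal_ofReal

/-- `x ≠ 0` cannot be dropped: with `0 ^ 0 = 1` the inequality fails at `x = 0` when `b = 1 > a`. -/
lemma gammaPDF_mul_gammaPDF_le {a b r x y : ℝ} (ha : 0 < a) (hab : a ≤ b) (hr : 0 ≤ r)
    (hx : x ≠ 0) (hxy : x ≤ y) :
    gammaPDF a r y * gammaPDF b r x ≤ gammaPDF a r x * gammaPDF b r y := by
  rcases hx.lt_or_gt with hx | hx
  · simp [gammaPDF_of_neg hx]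
  have hy : 0 < y := hx.trans_le hxy
  have hΓa := Gamma_pos_of_pos ha
  have hΓb := Gamma_pos_of_pos (ha.trans_le hab)
  rw [gammaPDF_of_nonneg hx.le, gammaPDF_of_nonneg hy.le, gammaPDF_of_nonneg hx.le,
    gammaPDF_of_nonneg hy.le, ← ENNReal.ofReal_mul (by positivity),
    ← ENNReal.ofReal_mul (by positivity)]
  refine ENNReal.ofReal_le_ofReal ?_
  set C := r ^ a / Gamma a * (r ^ b / Gamma b) * (exp (-(r * y)) * exp (-(r * x)))
  have hC : 0 ≤ C := by positivity
  calc r ^ a / Gamma a * y ^ (a - 1) * exp (-(r * y))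
        * (r ^ b / Gamma b * x ^ (b - 1) * exp (-(r * x)))
      = C * (y ^ (a - 1) * x ^ (b - 1)) := by ring
    _ ≤ C * (x ^ (a - 1) * y ^ (b - 1)) :=
        mul_le_mul_of_nonneg_left (rpow_mul_rpow_le_rpow_mul_rpow (by linarith) hx hxy) hC
    _ = _ := by ring

theorem gamma_tail_arrangement_increasing_general (α₁ α₂ l₁ l₂ c : ℝ)
    (hα₁ : 0 < α₁) (hα : α₁ < α₂) (hl : l₁ < l₂) :
    ((gammaMeasure α₁ 1).prod (gammaMeasure α₂ 1)) {x : ℝ × ℝ | c ≤ l₂ * x.1 + l₁ * x.2}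
      ≤ ((gammaMeasure α₁ 1).prod (gammaMeasure α₂ 1))
          {x : ℝ × ℝ | c ≤ l₁ * x.1 + l₂ * x.2} := by
  have hratio : ∀ᵐ x ∂volume, ∀ y, x ≤ y →
      gammaPDF α₁ 1 y * gammaPDF α₂ 1 x ≤ gammaPDF α₁ 1 x * gammaPDF α₂ 1 y := by
    filter_upwards [Measure.ae_ne volume 0] with x hx y hxy
    exact gammaPDF_mul_gammaPDF_le hα₁ hα.le zero_le_one hx hxy
  exact prod_withDensity_tailSet_le (measurable_gammaPDF α₁ 1) (measurable_gammaPDF α₂ 1)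
    hratio hl.le c

/-- The tail probability of a positive combination of independent standard gamma
variables is arrangement increasing: pairing the larger coefficient with the larger
shape gives the larger tail. -/
theorem gamma_tail_arrangement_increasing (α₁ α₂ l₁ l₂ c : ℝ)
    (hα₁ : 0 < α₁) (hα : α₁ < α₂) (hl₁ : 0 < l₁) (hl : l₁ < l₂) (hc : 0 < c) :
    ((gammaMeasure α₁ 1).prod (gammaMeasure α₂ 1)) {x : ℝ × ℝ | c ≤ l₂ * x.1 + l₁ * x.2}
      ≤ ((gammaMeasure α₁ 1).prod (gammaMeasure α₂ 1))
          {x : ℝ × ℝ | c ≤ l₁ * x.1 + l₂ * x.2} :=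
  gamma_tail_arrangement_increasing_general α₁ α₂ l₁ l₂ c hα₁ hα hl
end
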